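/- Let s₁ be the real 4-dimensional Lie algebra with basis e₁, e₂, e₃, e₄ and nonzero brackets ⁅e₂, e₄⁆ = −e₁ and ⁅e₃, e₄⁆ = −e₃ (all other brackets of basis elements zero, extended bilinearly and antisymmetrically). Write e_{ij} = e_i ⊗ e_j − e_j ⊗ e_i ∈ s₁ ⊗[ℝ] s₁. Then the orbit of e_{14} under the maps T ⊗ T, for T ranging over all Lie algebra automorphisms of s₁, is exactly the set { x₁ • e_{12} + x₂ • e_{13} + x₃ • e_{14} : x₁, x₂ ∈ ℝ, x₃ ∈ ℝ, x₃ ≠ 0 }. -/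

import Mathlib

/-!
An automorphism `T` of `s₁` preserves its centre `K e₁`, so `T e₁ = c e₁` with `c ≠ 0`, and it
preserves `x ↦ tr (ad x)`, which on `s₁` is the `e₄`-coordinate; hence
`T e₄ = g₀ e₁ + g₁ e₂ + g₂ e₃ + e₄` and `T(e₁₄) = c g₁ e₁₂ + c g₂ e₁₃ + c e₁₄`, the `e₁ ⊗ e₁` terms
cancelling. Conversely, for every `c ≠ 0` the map `e₁ ↦ c e₁`, `e₂ ↦ c e₂`, `e₃ ↦ e₃`,
`e₄ ↦ g₀ e₁ + g₁ e₂ + g₂ e₃ + e₄` is an automorphism, which realises every such tensor.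
-/

open TensorProduct

section TensorProduct

variable {R M : Type*} [CommRing R] [AddCommGroup M] [Module R M]

lemma smul_tmul_sub_tmul_smul_eq (u v w z : M) (c g₀ g₁ g₂ : R) :
    (c • u) ⊗ₜ[R] (g₀ • u + g₁ • v + g₂ • w + z) - (g₀ • u + g₁ • v + g₂ • w + z) ⊗ₜ[R] (c • u) =
      (c * g₁) • (u ⊗ₜ[R] v - v ⊗ₜ[R] u) + (c * g₂) • (u ⊗ₜ[R] w - w ⊗ₜ[R] u) +
        c • (u ⊗ₜ[R] z - z ⊗ₜ[R] u) := by
  simp only [tmul_add, add_tmul, tmul_smul, ← smul_tmul']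
  module

end TensorProduct

section LieAutomorphism

variable {R L : Type*} [CommRing R] [LieRing L] [LieAlgebra R L]

lemma lie_map_eq_zero_of_forall_lie_eq_zero (T : L ≃ₗ[R] L)
    (hT : ∀ x y : L, T ⁅x, y⁆ = ⁅T x, T y⁆) {x : L} (hx : ∀ y : L, ⁅x, y⁆ = 0) (y : L) :
    ⁅T x, y⁆ = 0 := by
  rw [← T.apply_symm_apply y, ← hT, hx, map_zero]

lemma trace_ad_map [Module.Free R L] [Module.Finite R L] (T : L ≃ₗ[R] L)
    (hT : ∀ x y : L, T ⁅x, y⁆ = ⁅T x, T y⁆) (x : L) :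
    LinearMap.trace R L (LieAlgebra.ad R L (T x)) = LinearMap.trace R L (LieAlgebra.ad R L x) := by
  have : LieAlgebra.ad R L (T x) = T.conj (LieAlgebra.ad R L x) := by
    ext y; simp [LinearEquiv.conj_apply, hT]
  rw [this, LinearMap.trace_conj']

end LieAutomorphism

lemma Module.Basis.sum_repr_fin_four {R M : Type*} [CommRing R] [AddCommGroup M] [Module R M]
    (b : Module.Basis (Fin 4) R M) (x : M) :
    b.repr x 0 • b 0 + b.repr x 1 • b 1 + b.repr x 2 • b 2 + b.repr x 3 • b 3 = x := by
  simpa only [Fin.sum_univ_four] using b.sum_repr x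

/-- `b i` plays the role of `e_{i+1}` of `s_{4,1}`. -/
structure IsS41Basis {K L : Type*} [CommRing K] [LieRing L] [LieAlgebra K L]
    (b : Module.Basis (Fin 4) K L) : Prop where
  lie_zero_one : ⁅b 0, b 1⁆ = 0
  lie_zero_two : ⁅b 0, b 2⁆ = 0
  lie_zero_three : ⁅b 0, b 3⁆ = 0
  lie_one_two : ⁅b 1, b 2⁆ = 0
  lie_one_three : ⁅b 1, b 3⁆ = -b 0
  lie_two_three : ⁅b 2, b 3⁆ = -b 2

namespace IsS41Basis

section CommRing

variable {K L : Type*} [CommRing K] [LieRing L] [LieAlgebra K L]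
  {b : Module.Basis (Fin 4) K L}

lemma lie_eq (hb : IsS41Basis b) (x y : L) :
    ⁅x, y⁆ = (b.repr x 3 * b.repr y 1 - b.repr x 1 * b.repr y 3) • b 0 +
      (b.repr x 3 * b.repr y 2 - b.repr x 2 * b.repr y 3) • b 2 := by
  have h10 : ⁅b 1, b 0⁆ = 0 := by rw [← lie_skew, hb.lie_zero_one, neg_zero]
  have h20 : ⁅b 2, b 0⁆ = 0 := by rw [← lie_skew, hb.lie_zero_two, neg_zero]
  have h30 : ⁅b 3, b 0⁆ = 0 := by rw [← lie_skew, hb.lie_zero_three, neg_zero]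
  have h21 : ⁅b 2, b 1⁆ = 0 := by rw [← lie_skew, hb.lie_one_two, neg_zero]
  have h31 : ⁅b 3, b 1⁆ = b 0 := by rw [← lie_skew, hb.lie_one_three, neg_neg]
  have h32 : ⁅b 3, b 2⁆ = b 2 := by rw [← lie_skew, hb.lie_two_three, neg_neg]
  conv_lhs => rw [← b.sum_repr_fin_four x, ← b.sum_repr_fin_four y]
  simp only [add_lie, lie_add, smul_lie, lie_smul, lie_self, hb.lie_zero_one, hb.lie_zero_two,
    hb.lie_zero_three, hb.lie_one_two, hb.lie_one_three, hb.lie_two_three, h10, h20, h30, h21,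
    h31, h32]
  module

lemma eq_smul_of_forall_lie_eq_zero (hb : IsS41Basis b) {x : L} (hx : ∀ y : L, ⁅x, y⁆ = 0) :
    x = b.repr x 0 • b 0 := by
  have h3 : b.repr x 3 = 0 := by simpa [hb.lie_eq] using congrArg (b.repr · 0) (hx (b 1))
  have h1 : b.repr x 1 = 0 := by simpa [hb.lie_eq] using congrArg (b.repr · 0) (hx (b 3))
  have h2 : b.repr x 2 = 0 := by simpa [hb.lie_eq] using congrArg (b.repr · 2) (hx (b 3))
  conv_lhs => rw [← b.sum_repr_fin_four x, h1, h2, h3]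
  simp only [zero_smul, add_zero]

lemma trace_ad (hb : IsS41Basis b) (x : L) :
    LinearMap.trace K L (LieAlgebra.ad K L x) = b.repr x 3 := by
  rw [LinearMap.trace_eq_matrix_trace K b, Matrix.trace, Fin.sum_univ_four]
  simp [LinearMap.toMatrix_apply, hb.lie_eq]

end CommRing

section Field

variable {K L : Type*} [Field K] [LieRing L] [LieAlgebra K L] {b : Module.Basis (Fin 4) K L}

lemma exists_map_zero_eq_smul (hb : IsS41Basis b) (T : L ≃ₗ[K] L)
    (hT : ∀ x y : L, T ⁅x, y⁆ = ⁅T x, T y⁆) : ∃ c : K, c ≠ 0 ∧ T (b 0) = c • b 0 := by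
  have hcentral : ∀ y : L, ⁅b 0, y⁆ = 0 := fun y => by simp [hb.lie_eq]
  have hT0 := hb.eq_smul_of_forall_lie_eq_zero
    (lie_map_eq_zero_of_forall_lie_eq_zero T hT hcentral)
  refine ⟨_, fun hc => b.ne_zero 0 (T.injective ?_), hT0⟩
  rw [hT0, hc, zero_smul, map_zero]

lemma exists_map_three_eq (hb : IsS41Basis b) (T : L ≃ₗ[K] L)
    (hT : ∀ x y : L, T ⁅x, y⁆ = ⁅T x, T y⁆) :
    ∃ g₀ g₁ g₂ : K, T (b 3) = g₀ • b 0 + g₁ • b 1 + g₂ • b 2 + b 3 := by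
  have : Module.Finite K L := Module.Finite.of_basis b
  have h3 : b.repr (T (b 3)) 3 = 1 := by
    simpa [hb.trace_ad] using trace_ad_map T hT (b 3)
  refine ⟨b.repr (T (b 3)) 0, b.repr (T (b 3)) 1, b.repr (T (b 3)) 2, ?_⟩
  conv_lhs => rw [← b.sum_repr_fin_four (T (b 3)), h3, one_smul]

end Field

end IsS41Basis

section Automorphism

variable {K L : Type*} [Field K] [LieRing L] [LieAlgebra K L] (b : Module.Basis (Fin 4) K L)

noncomputable def s41Aut (c g₀ g₁ g₂ : K) : L →ₗ[K] L :=
  b.constr K ![c • b 0, c • b 1, b 2, g₀ • b 0 + g₁ • b 1 + g₂ • b 2 + b 3]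

variable {b}

lemma s41Aut_apply (c g₀ g₁ g₂ : K) (x : L) :
    s41Aut b c g₀ g₁ g₂ x = (c * b.repr x 0 + g₀ * b.repr x 3) • b 0 +
      (c * b.repr x 1 + g₁ * b.repr x 3) • b 1 + (b.repr x 2 + g₂ * b.repr x 3) • b 2 +
        b.repr x 3 • b 3 := by
  conv_lhs => rw [← b.sum_repr_fin_four x]
  simp only [s41Aut, map_add, map_smul, Module.Basis.constr_basis, Matrix.cons_val_zero,
    Matrix.cons_val_one, Matrix.cons_val]
  module

lemma s41Aut_injective {c : K} (hc : c ≠ 0) (g₀ g₁ g₂ : K) :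
    Function.Injective (s41Aut b c g₀ g₁ g₂) := by
  rw [← LinearMap.ker_eq_bot, LinearMap.ker_eq_bot']
  intro x hx
  rw [s41Aut_apply] at hx
  have h3 : b.repr x 3 = 0 := by simpa using congrArg (b.repr · 3) hx
  have h2 : b.repr x 2 = 0 := by simpa [h3] using congrArg (b.repr · 2) hx
  have h1 : b.repr x 1 = 0 := by simpa [h3, hc] using congrArg (b.repr · 1) hx
  have h0 : b.repr x 0 = 0 := by simpa [h3, hc] using congrArg (b.repr · 0) hx
  rw [← b.sum_repr_fin_four x, h0, h1, h2, h3]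
  simp only [zero_smul, add_zero]

lemma IsS41Basis.s41Aut_lie (hb : IsS41Basis b) (c g₀ g₁ g₂ : K) (x y : L) :
    s41Aut b c g₀ g₁ g₂ ⁅x, y⁆ = ⁅s41Aut b c g₀ g₁ g₂ x, s41Aut b c g₀ g₁ g₂ y⁆ := by
  rw [hb.lie_eq x y, hb.lie_eq (s41Aut b c g₀ g₁ g₂ x), s41Aut_apply, s41Aut_apply, s41Aut_apply]
  match_scalars <;> simp <;> ring

end Automorphism

/-- For the real 4-dimensional Lie algebra `s₁` (Šnobl–Winternitz `s_{4,1}`), with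
`e_{ij} = e_i ⊗ e_j - e_j ⊗ e_i`, the orbit of `e₁₄` under the maps `T ⊗ T`, with `T`
ranging over the Lie algebra automorphisms of `s₁`, is
`{ x₁ e₁₂ + x₂ e₁₃ + x₃ e₁₄ : x₁, x₂ ∈ ℝ, x₃ ≠ 0 }`. -/
theorem stmt_18 {L : Type*} [LieRing L] [LieAlgebra ℝ L]
    (b : Module.Basis (Fin 4) ℝ L)
    (h12 : ⁅b 0, b 1⁆ = 0) (h13 : ⁅b 0, b 2⁆ = 0) (h14 : ⁅b 0, b 3⁆ = 0)
    (h23 : ⁅b 1, b 2⁆ = 0) (h24 : ⁅b 1, b 3⁆ = -b 0) (h34 : ⁅b 2, b 3⁆ = -b 2) :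
    {w : L ⊗[ℝ] L | ∃ T : L ≃ₗ[ℝ] L, (∀ x y : L, T ⁅x, y⁆ = ⁅T x, T y⁆) ∧
        TensorProduct.congr T T (b 0 ⊗ₜ[ℝ] b 3 - b 3 ⊗ₜ[ℝ] b 0) = w} =
      {w : L ⊗[ℝ] L | ∃ x₁ x₂ x₃ : ℝ, x₃ ≠ 0 ∧
        w = x₁ • (b 0 ⊗ₜ[ℝ] b 1 - b 1 ⊗ₜ[ℝ] b 0) +
            x₂ • (b 0 ⊗ₜ[ℝ] b 2 - b 2 ⊗ₜ[ℝ] b 0) +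
            x₃ • (b 0 ⊗ₜ[ℝ] b 3 - b 3 ⊗ₜ[ℝ] b 0)} := by
  have hb : IsS41Basis b := ⟨h12, h13, h14, h23, h24, h34⟩
  ext w
  constructor
  · rintro ⟨T, hT, rfl⟩
    obtain ⟨c, hc, hT0⟩ := hb.exists_map_zero_eq_smul T hT
    obtain ⟨g₀, g₁, g₂, hT3⟩ := hb.exists_map_three_eq T hT
    refine ⟨c * g₁, c * g₂, c, hc, ?_⟩
    rw [map_sub, congr_tmul, congr_tmul, hT0, hT3, smul_tmul_sub_tmul_smul_eq]
  · rintro ⟨x₁, x₂, x₃, hx₃, rfl⟩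
    have : Module.Finite ℝ L := Module.Finite.of_basis b
    let T := LinearEquiv.ofInjectiveEndo (s41Aut b x₃ 0 (x₁ / x₃) (x₂ / x₃))
      (s41Aut_injective hx₃ _ _ _)
    refine ⟨T, hb.s41Aut_lie x₃ 0 (x₁ / x₃) (x₂ / x₃), ?_⟩
    have hT0 : T (b 0) = x₃ • b 0 := by simp [T, s41Aut]
    have hT3 : T (b 3) = (0 : ℝ) • b 0 + (x₁ / x₃) • b 1 + (x₂ / x₃) • b 2 + b 3 := by
      simp [T, s41Aut]
    rw [map_sub, congr_tmul, congr_tmul, hT0, hT3, smul_tmul_sub_tmul_smul_eq,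
      mul_div_cancel₀ _ hx₃, mul_div_cancel₀ _ hx₃]
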